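/- arXiv:1104.3900 — 10 statements merged into one kernel-verified Lean document; each statement's English description precedes it below -/
import Mathlib

section
/- A pair (x1, x2) of non-negative integers with x1 ≤ x2 satisfies (x1 + x2)^2 − (x1 + x2) − 4·x1·x2 = 0 if and only if there exists a natural number m such that x1 = m(m−1)/2 and x2 = m(m+1)/2. In other words, the 2-color fair games are exactly the pairs of consecutive triangular numbers. -/
/-!
Since `(x₁ + x₂)² - 4 x₁ x₂ = (x₂ - x₁)²`, the pair is fair exactly when `(x₂ - x₁)² = x₁ + x₂`.
With `m = x₂ - x₁` this says `x₁ + x₂ = m²` and `x₂ - x₁ = m`, i.e. `2 x₁ = m (m - 1)` and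
`2 x₂ = m (m + 1)`; the hypothesis `x₁ ≤ x₂` makes `m` a natural number.
-/

theorem sq_add_sub_add_sub_four_mul_eq_zero_iff {R : Type*} [CommRing R] (x₁ x₂ : R) :
    (x₁ + x₂) ^ 2 - (x₁ + x₂) - 4 * x₁ * x₂ = 0 ↔ (x₂ - x₁) ^ 2 = x₁ + x₂ := by
  rw [← sub_eq_zero (a := (x₂ - x₁) ^ 2)]
  constructor <;> intro h <;> linear_combination h

theorem two_mul_eq_triangular_iff {R : Type*} [CommRing R] [IsDomain R] [CharZero R]
    (x₁ x₂ m : R) :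
    (2 * x₁ = m * (m - 1) ∧ 2 * x₂ = m * (m + 1)) ↔ x₂ - x₁ = m ∧ (x₂ - x₁) ^ 2 = x₁ + x₂ := by
  constructor
  · rintro ⟨h₁, h₂⟩
    have hm : x₂ - x₁ = m :=
      mul_left_cancel₀ (two_ne_zero' R) (by linear_combination h₂ - h₁)
    refine ⟨hm, mul_left_cancel₀ (two_ne_zero' R) ?_⟩
    rw [hm]
    linear_combination -h₁ - h₂
  · rintro ⟨hm, hsq⟩
    subst hm
    constructor <;> linear_combination -hsq

theorem stmt_0_general (x1 x2 : ℤ) (h2 : x1 ≤ x2) :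
    (x1 + x2) ^ 2 - (x1 + x2) - 4 * x1 * x2 = 0 ↔
      ∃ m : ℕ, 2 * x1 = (m : ℤ) * ((m : ℤ) - 1) ∧ 2 * x2 = (m : ℤ) * ((m : ℤ) + 1) := by
  rw [sq_add_sub_add_sub_four_mul_eq_zero_iff]
  constructor
  · intro hsq
    refine ⟨(x2 - x1).toNat, (two_mul_eq_triangular_iff _ _ _).2 ⟨?_, hsq⟩⟩
    exact (Int.toNat_of_nonneg (sub_nonneg.2 h2)).symm
  · rintro ⟨m, hm⟩
    exact ((two_mul_eq_triangular_iff _ _ _).1 hm).2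

/-- The 2-color fair games are exactly the pairs of consecutive triangular numbers. -/
theorem stmt_0 (x1 x2 : ℤ) (h1 : 0 ≤ x1) (h2 : x1 ≤ x2) :
    (x1 + x2) ^ 2 - (x1 + x2) - 4 * x1 * x2 = 0 ↔
      ∃ m : ℕ, 2 * x1 = (m : ℤ) * ((m : ℤ) - 1) ∧ 2 * x2 = (m : ℤ) * ((m : ℤ) + 1) :=
  stmt_0_general x1 x2 h2
end

section
/- For every real number k ≥ 0, the number of natural numbers m such that (m(m−1)/2)^2 + (m(m+1)/2)^2 ≤ k^2 equals ⌊√(r(k))⌋ + 1, where r(k) = (−1 + √(1 + 8k^2))/2. Consequently the number of 2-color fair games of Euclidean norm at most k is asymptotic to 2^(1/4)·√k as k → ∞. -/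
open Filter

/-- The set of 2-color fair games (pairs of consecutive triangular numbers,
indexed by `m`) of Euclidean norm at most `k`. -/
def fairGameIndices (k : ℝ) : Set ℕ :=
  {m : ℕ | ((m * (m - 1) / 2 : ℕ) : ℝ) ^ 2 + ((m * (m + 1) / 2 : ℕ) : ℝ) ^ 2 ≤ k ^ 2}

noncomputable def r (k : ℝ) : ℝ := (-1 + Real.sqrt (1 + 8 * k ^ 2)) / 2

/-!
The game indexed by `m` has squared norm `(m⁴ + m²)/2`, and `r k` is the non-negative root of
`t² + t = 2k²`. Since `t ↦ t² + t` is increasing on `[0, ∞)`, the game lies in the ball of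
radius `k` iff `m² ≤ r k`, so the admissible `m` are exactly `0, …, ⌊√(r k)⌋`. The asymptotics
follow from `r k = √2·k + O(1)`, which is read off the same quadratic equation.
-/

open Topology

lemma r_nonneg (k : ℝ) : 0 ≤ r k := by
  have : 1 ≤ Real.sqrt (1 + 8 * k ^ 2) :=
    Real.one_le_sqrt.mpr (le_add_of_nonneg_right (by positivity))
  unfold r
  linarith

lemma r_sq_add_r (k : ℝ) : r k ^ 2 + r k = 2 * k ^ 2 := by
  have := Real.sq_sqrt (by positivity : (0 : ℝ) ≤ 1 + 8 * k ^ 2)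
  unfold r
  linear_combination this / 4

lemma sq_add_sq_triangle (m : ℕ) :
    ((m * (m - 1) / 2 : ℕ) : ℝ) ^ 2 + ((m * (m + 1) / 2 : ℕ) : ℝ) ^ 2
      = ((m : ℝ) ^ 4 + (m : ℝ) ^ 2) / 2 := by
  cases m with
  | zero => norm_num
  | succ n =>
    have h₁ : 2 ∣ (n + 1) * (n + 1 - 1) := by
      simpa [Nat.mul_comm] using (Nat.even_mul_succ_self n).two_dvd
    have h₂ : 2 ∣ (n + 1) * (n + 1 + 1) := (Nat.even_mul_succ_self (n + 1)).two_dvd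
    rw [Nat.cast_div h₁ two_ne_zero, Nat.cast_div h₂ two_ne_zero]
    push_cast [Nat.add_sub_cancel]
    ring

lemma mem_fairGameIndices_iff (k : ℝ) (m : ℕ) :
    m ∈ fairGameIndices k ↔ (m : ℝ) ≤ Real.sqrt (r k) := by
  have hr := r_nonneg k
  rw [fairGameIndices, Set.mem_ofPred_eq, sq_add_sq_triangle, Real.le_sqrt (by positivity) hr,
    div_le_iff₀' two_pos, ← r_sq_add_r]
  constructor
  · intro h
    nlinarith [sq_nonneg ((m : ℝ) ^ 2)]
  · intro h
    nlinarith [mul_le_mul h h (sq_nonneg (m : ℝ)) hr]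

lemma fairGameIndices_eq_Iic (k : ℝ) : fairGameIndices k = Set.Iic ⌊Real.sqrt (r k)⌋₊ := by
  ext m
  rw [Set.mem_Iic, Nat.le_floor_iff (Real.sqrt_nonneg _), mem_fairGameIndices_iff]

lemma ncard_fairGameIndices (k : ℝ) :
    (fairGameIndices k).ncard = ⌊Real.sqrt (r k)⌋₊ + 1 := by
  rw [fairGameIndices_eq_Iic, ← Finset.coe_Iic, Set.ncard_coe_finset, Nat.card_Iic]

lemma r_le_sqrt_two_mul {k : ℝ} (hk : 0 ≤ k) : r k ≤ Real.sqrt 2 * k := by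
  refine le_of_sq_le_sq ?_ (by positivity)
  rw [mul_pow, Real.sq_sqrt zero_le_two]
  linarith [r_sq_add_r k, r_nonneg k]

lemma sqrt_two_mul_le_r_add_half (k : ℝ) : Real.sqrt 2 * k ≤ r k + 1 / 2 := by
  refine le_of_sq_le_sq ?_ (by linarith [r_nonneg k])
  rw [mul_pow, Real.sq_sqrt zero_le_two]
  nlinarith [r_sq_add_r k]

lemma tendsto_r_div_sqrt_two_mul :
    Tendsto (fun k => r k / (Real.sqrt 2 * k)) atTop (𝓝 1) := by
  have hlin : Tendsto (fun k : ℝ => 2 * Real.sqrt 2 * k) atTop atTop :=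
    tendsto_id.const_mul_atTop (by positivity)
  have hlower : Tendsto (fun k : ℝ => 1 - (2 * Real.sqrt 2 * k)⁻¹) atTop (𝓝 1) := by
    simpa using tendsto_const_nhds.sub hlin.inv_tendsto_atTop
  refine tendsto_of_tendsto_of_tendsto_of_le_of_le' hlower tendsto_const_nhds ?_ ?_ <;>
    filter_upwards [eventually_gt_atTop 0] with k hk
  · have hexpand :
        (1 - (2 * Real.sqrt 2 * k)⁻¹) * (Real.sqrt 2 * k) = Real.sqrt 2 * k - 1 / 2 := by
      field_simp
    rw [le_div_iff₀ (by positivity), hexpand]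
    linarith [sqrt_two_mul_le_r_add_half k]
  · rw [div_le_one (by positivity)]
    exact r_le_sqrt_two_mul hk.le

lemma tendsto_sqrt_r_div :
    Tendsto (fun k => Real.sqrt (r k) / (2 ^ ((1 : ℝ) / 4) * Real.sqrt k)) atTop (𝓝 1) := by
  have hquarter : Real.sqrt (Real.sqrt 2) = 2 ^ ((1 : ℝ) / 4) := by
    rw [Real.sqrt_eq_rpow, Real.sqrt_eq_rpow, ← Real.rpow_mul zero_le_two]
    norm_num
  have h := (Real.continuous_sqrt.tendsto 1).comp tendsto_r_div_sqrt_two_mul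
  rw [Real.sqrt_one] at h
  refine h.congr' ?_
  filter_upwards [eventually_ge_atTop 0] with k hk
  rw [Function.comp_apply, Real.sqrt_div' _ (by positivity),
    Real.sqrt_mul (Real.sqrt_nonneg 2), hquarter]

lemma tendsto_natFloor_add_one_div {α : Type*} {l : Filter α} {g h : α → ℝ}
    (hgh : Tendsto (fun x => g x / h x) l (𝓝 1)) (hh : Tendsto h l atTop) :
    Tendsto (fun x => ((⌊g x⌋₊ + 1 : ℕ) : ℝ) / h x) l (𝓝 1) := by
  have hupper : Tendsto (fun x => g x / h x + (h x)⁻¹) l (𝓝 1) := by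
    simpa using hgh.add hh.inv_tendsto_atTop
  have hh_pos := hh.eventually_gt_atTop 0
  have hg_pos : ∀ᶠ x in l, 0 < g x := by
    filter_upwards [hgh.eventually (lt_mem_nhds one_pos), hh_pos] with x hx hx'
    exact (div_pos_iff_of_pos_right hx').mp hx
  refine tendsto_of_tendsto_of_tendsto_of_le_of_le' hgh hupper ?_ ?_ <;>
    filter_upwards [hg_pos, hh_pos] with x hgx hhx <;> push_cast
  · gcongr
    exact (Nat.lt_floor_add_one _).le
  · rw [← one_div, ← add_div]
    gcongr
    exact Nat.floor_le hgx.le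

/-- The number of 2-color fair games of norm at most `k` is `⌊√(r k)⌋ + 1` where
`r k = (−1 + √(1+8k²))/2`; consequently it is asymptotic to `2^(1/4)·√k`. -/
theorem stmt_1 :
    (∀ k : ℝ, 0 ≤ k → ((fairGameIndices k).ncard : ℤ) = ⌊Real.sqrt (r k)⌋ + 1) ∧
      Tendsto (fun k : ℝ => ((fairGameIndices k).ncard : ℝ) / (2 ^ ((1 : ℝ) / 4) * Real.sqrt k))
        atTop (nhds 1) := by
  refine ⟨fun k _ => ?_, ?_⟩
  · rw [ncard_fairGameIndices, Nat.cast_add_one, Int.natCast_floor_eq_floor (Real.sqrt_nonneg _)]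
  · simp_rw [ncard_fairGameIndices]
    exact tendsto_natFloor_add_one_div tendsto_sqrt_r_div
      (Real.tendsto_sqrt_atTop.const_mul_atTop (by positivity))
end

section
/- For every n ≥ 2, the set of tuples x ∈ ℤ^n with all coordinates strictly positive and F_n(x) = 0 is infinite; that is, there are infinitely many faithful n-color fair games. -/
/-!
Prepending a coordinate `a` to `y` changes `F` by `a² − (2 s(y) + 1) a`. Hence prepending
`2 s(y) + 1` to a fair game gives a fair game, so faithful fair games exist in every length
(they are `(3^(m-1), …, 3, 1)`). Prepending two coordinates `a, b` to a fair game `y` gives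
`F = (a − b)² − c (a + b)` with `c = 2 s(y) + 1`, which vanishes along the infinite family
`a = c k (2k + 1)`, `b = c k (2k − 1)`.
-/

open Finset

/-- `F n x = s(x)² − s(x) − 4·Σ_{i<j} x_i x_j`, whose non-negative zeros are the
`n`-color fair games. -/
def F {n : ℕ} (x : Fin n → ℤ) : ℤ :=
  (∑ i, x i) ^ 2 - (∑ i, x i) - 4 * ∑ i, ∑ j, if i < j then x i * x j else 0

lemma sum_sum_lt_cons {m : ℕ} (a : ℤ) (y : Fin m → ℤ) :
    (∑ i, ∑ j,
        if i < j then (Fin.cons a y : Fin (m + 1) → ℤ) i * (Fin.cons a y : Fin (m + 1) → ℤ) j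
        else 0)
      = a * ∑ i, y i + ∑ i, ∑ j, if i < j then y i * y j else 0 := by
  rw [Fin.sum_univ_succ]
  congr 1
  · rw [Fin.sum_univ_succ]
    simp [Fin.succ_pos, mul_sum]
  · refine sum_congr rfl fun i _ => ?_
    rw [Fin.sum_univ_succ]
    simp [Fin.succ_lt_succ_iff]

lemma F_cons {m : ℕ} (a : ℤ) (y : Fin m → ℤ) :
    F (Fin.cons a y : Fin (m + 1) → ℤ) = F y + a ^ 2 - (2 * ∑ i, y i + 1) * a := by
  unfold F
  rw [sum_sum_lt_cons, Fin.sum_cons]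
  ring

lemma F_cons_cons {m : ℕ} (a b : ℤ) (y : Fin m → ℤ) :
    F (Fin.cons a (Fin.cons b y) : Fin (m + 2) → ℤ)
      = F y + (a - b) ^ 2 - (2 * ∑ i, y i + 1) * (a + b) := by
  rw [F_cons, F_cons, Fin.sum_cons]
  ring

lemma exists_faithful_fair_game (m : ℕ) : ∃ y : Fin m → ℤ, (∀ i, 0 < y i) ∧ F y = 0 := by
  induction m with
  | zero => exact ⟨![], finZeroElim, by simp [F]⟩
  | succ m ih =>
    obtain ⟨y, hpos, hF⟩ := ih
    have hsum : 0 ≤ ∑ i, y i := sum_nonneg fun i _ => (hpos i).le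
    refine ⟨Fin.cons (2 * ∑ i, y i + 1) y, fun i => ?_, ?_⟩
    · refine Fin.cases ?_ (fun j => ?_) i
      · simp only [Fin.cons_zero]; omega
      · simpa only [Fin.cons_succ] using hpos j
    · rw [F_cons, hF]
      ring

def fairExtension {m : ℕ} (y : Fin m → ℤ) (k : ℤ) : Fin (m + 2) → ℤ :=
  let c := 2 * ∑ i, y i + 1
  Fin.cons (c * k * (2 * k + 1)) (Fin.cons (c * k * (2 * k - 1)) y)

lemma F_fairExtension {m : ℕ} {y : Fin m → ℤ} (hy : F y = 0) (k : ℤ) :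
    F (fairExtension y k) = 0 := by
  rw [fairExtension, F_cons_cons, hy]
  ring

lemma fairExtension_pos {m : ℕ} {y : Fin m → ℤ} (hy : ∀ i, 0 < y i) {k : ℤ} (hk : 0 < k)
    (i : Fin (m + 2)) : 0 < fairExtension y k i := by
  have hc : 0 < 2 * ∑ i, y i + 1 := by
    have := sum_nonneg fun i (_ : i ∈ univ) => (hy i).le
    omega
  refine Fin.cases ?_ (fun j => Fin.cases ?_ (fun l => ?_) j) i
  · simp only [fairExtension, Fin.cons_zero]
    have : 0 < 2 * k + 1 := by omega
    positivity
  · simp only [fairExtension, Fin.cons_succ, Fin.cons_zero]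
    have : 0 < 2 * k - 1 := by omega
    positivity
  · simpa only [fairExtension, Fin.cons_succ] using hy l

lemma fairExtension_injective {m : ℕ} {y : Fin m → ℤ} (hy : ∀ i, 0 < y i) :
    Function.Injective (fairExtension y) := by
  intro k k' h
  have hc : 2 * (2 * ∑ i, y i + 1) ≠ 0 := by
    have := sum_nonneg fun i (_ : i ∈ univ) => (hy i).le
    omega
  -- the first two coordinates differ by `2 c k`
  have h0 := congrFun h 0
  have h1 := congrFun h 1
  simp only [fairExtension, Fin.cons_zero, Fin.cons_one] at h0 h1
  have : 2 * (2 * ∑ i, y i + 1) * (k - k') = 0 := by linear_combination h0 - h1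
  rcases mul_eq_zero.mp this with h | h
  · exact absurd h hc
  · omega

/-- There are infinitely many faithful `n`-color fair games. -/
theorem stmt_2 (n : ℕ) (hn : 2 ≤ n) :
    {x : Fin n → ℤ | (∀ i, 0 < x i) ∧ F x = 0}.Infinite := by
  obtain ⟨m, rfl⟩ : ∃ m, n = m + 2 := ⟨n - 2, by omega⟩
  obtain ⟨y, hpos, hF⟩ := exists_faithful_fair_game m
  have hinj : Function.Injective fun k : ℕ => fairExtension y (k + 1) :=
    (fairExtension_injective hpos).comp fun k k' h => by simpa using h
  refine Set.infinite_of_injective_forall_mem hinj fun k => ⟨?_, F_fairExtension hF _⟩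
  exact fairExtension_pos hpos (by positivity)
end

section
/- Fix n ≥ 3. Let a = (a_1,…,a_{n−3}) ∈ ℤ^{n−3}, let S = Σ a_i and N = Σ a_i^2, let m ≥ 0, and let 0 ≤ b ≤ c be integers with (2b+1)(2c+1) = m^2 + m + 1 + 2(S^2 + S + N). Then each of the following n-tuples satisfies F_n = 0: (b−S, c−S, b+c+1−S+m, a), (b−S, c−S, b+c−S−m, a), (−(c+1)−S, −(b+1)−S, −(b+c+S+1)+m, a), and (−(c+1)−S, −(b+1)−S, −(b+c+S+2)−m, a). -/
/-!
Expanding the square gives `F_n(x) = 2 Σ xᵢ² - s(x)² - s(x)`, so on each of the four tuples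
`F_n` is a polynomial in `b, c, m, S, N`, namely
`m² + m + 1 + 2(S² + S + N) - (2b+1)(2c+1)`, which vanishes by hypothesis.
-/

open Finset

theorem sq_sum_eq_sum_sq_add_two_mul_sum_lt {ι R : Type*} [Fintype ι] [LinearOrder ι]
    [CommSemiring R] (x : ι → R) :
    (∑ i, x i) ^ 2 = ∑ i, x i ^ 2 + 2 * ∑ i, ∑ j, if i < j then x i * x j else 0 := by
  set p : ι → ι → R := fun i j => if i < j then x i * x j else 0
  have hsplit : ∀ i j, x i * x j = p i j + p j i + if i = j then x i * x j else 0 := by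
    intro i j
    rcases lt_trichotomy i j with h | rfl | h
    · simp [p, h, h.ne, h.not_gt]
    · simp [p]
    · simp [p, h, h.ne', h.not_gt, mul_comm]
  calc (∑ i, x i) ^ 2
      = ∑ i, ∑ j, (p i j + p j i + if i = j then x i * x j else 0) := by
        simp only [sq, sum_mul_sum, ← hsplit]
    _ = ∑ i, ∑ j, p i j + ∑ j, ∑ i, p j i + ∑ i, x i ^ 2 := by
        simp only [sum_add_distrib, sum_ite_eq, mem_univ, if_true, sq]
        rw [sum_comm (f := fun i j => p j i)]
    _ = ∑ i, x i ^ 2 + 2 * ∑ i, ∑ j, p i j := by ring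

theorem F_eq_two_mul_sum_sq_sub {n : ℕ} (x : Fin n → ℤ) :
    F x = 2 * ∑ i, x i ^ 2 - (∑ i, x i) ^ 2 - ∑ i, x i := by
  rw [F, sq_sum_eq_sum_sq_add_two_mul_sum_lt]
  ring

theorem F_append_three {d : ℕ} (u v w : ℤ) (a : Fin d → ℤ) :
    F (Fin.append ![u, v, w] a) =
      2 * (u ^ 2 + v ^ 2 + w ^ 2 + ∑ i, a i ^ 2)
        - (u + v + w + ∑ i, a i) ^ 2 - (u + v + w + ∑ i, a i) := by
  simp only [F_eq_two_mul_sum_sq_sub, Fin.sum_univ_add, Fin.append_left, Fin.append_right,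
    Fin.sum_univ_three]
  simp [add_assoc]

theorem stmt_3_general (d : ℕ) (a : Fin d → ℤ) (m : ℤ) (b c : ℤ)
    (hfac : (2 * b + 1) * (2 * c + 1) =
      m ^ 2 + m + 1 + 2 * ((∑ i, a i) ^ 2 + (∑ i, a i) + ∑ i, (a i) ^ 2)) :
    F (Fin.append ![b - ∑ i, a i, c - ∑ i, a i, b + c + 1 - (∑ i, a i) + m] a) = 0 ∧
    F (Fin.append ![b - ∑ i, a i, c - ∑ i, a i, b + c - (∑ i, a i) - m] a) = 0 ∧
    F (Fin.append ![-(c + 1) - ∑ i, a i, -(b + 1) - ∑ i, a i,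
        -(b + c + (∑ i, a i) + 1) + m] a) = 0 ∧
    F (Fin.append ![-(c + 1) - ∑ i, a i, -(b + 1) - ∑ i, a i,
        -(b + c + (∑ i, a i) + 2) - m] a) = 0 := by
  refine ⟨?_, ?_, ?_, ?_⟩ <;> rw [F_append_three] <;> linear_combination -hfac

/-- The parametric solutions of the fair-game equation `F_n = 0` (`n = 3 + d ≥ 3`):
for `a ∈ ℤ^{n-3}`, `m ≥ 0` and `0 ≤ b ≤ c` with
`(2b+1)(2c+1) = m² + m + 1 + 2(S² + S + N)` (`S = Σaᵢ`, `N = Σaᵢ²`), the four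
displayed `n`-tuples are solutions. -/
theorem stmt_3 (d : ℕ) (a : Fin d → ℤ) (m : ℤ) (hm : 0 ≤ m) (b c : ℤ)
    (hb : 0 ≤ b) (hbc : b ≤ c)
    (hfac : (2 * b + 1) * (2 * c + 1) =
      m ^ 2 + m + 1 + 2 * ((∑ i, a i) ^ 2 + (∑ i, a i) + ∑ i, (a i) ^ 2)) :
    F (Fin.append ![b - ∑ i, a i, c - ∑ i, a i, b + c + 1 - (∑ i, a i) + m] a) = 0 ∧
    F (Fin.append ![b - ∑ i, a i, c - ∑ i, a i, b + c - (∑ i, a i) - m] a) = 0 ∧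
    F (Fin.append ![-(c + 1) - ∑ i, a i, -(b + 1) - ∑ i, a i,
        -(b + c + (∑ i, a i) + 1) + m] a) = 0 ∧
    F (Fin.append ![-(c + 1) - ∑ i, a i, -(b + 1) - ∑ i, a i,
        -(b + c + (∑ i, a i) + 2) - m] a) = 0 :=
  stmt_3_general d a m b c hfac
end

section
/- Consider solutions of F_3 = 0 in ℤ^3. (1) Every solution x with 1 + x_1 + x_2 + x_3 > 0 has all coordinates non-negative, i.e., is a 3-color fair game, and every solution with 1 + x_1 + x_2 + x_3 < 0 has all coordinates negative. (2) Every 3-color fair game is connected to (0,0,0) by the reflexive-transitive closure of the relation in which y is related to x when y is a permutation of a neighbor of x; likewise every solution with all coordinates negative is connected to (−1,−1,−1). Hence S_3 has exactly two connected components: the fair games and the negative solutions. -/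
/-!
For fixed `k`, write `t` and `q` for the sum and the sum of squares of the other two
coordinates. Then `F x = x_k ^ 2 - (2 t + 1) x_k + (2 q - t ^ 2 - t)` is a monic quadratic in
`x_k`; at a solution its other root is `2 t + 1 - x_k`, so passing to a neighbor is Vieta jumping.
Since `t ^ 2 ≤ 2 q`, this quadratic is positive at a negative `x_k` when `1 + s > 0`, which
gives non-negativity; the involution `x ↦ -1 - x` preserves `F` and neighbors and transfers
this to `1 + s < 0` (the value `s = -2` is excluded because `4 ∣ s ^ 2 - s`). At a non-zero
fair game, jumping the largest coordinate gives a fair game with smaller sum, so every fair game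
descends to `0`, and fair games are closed under neighbors, so `-1` is not reached from `0`.
-/

open Finset

def nbr {n : ℕ} (a : Fin n → ℤ) (k : Fin n) : Fin n → ℤ :=
  Function.update a k (2 * (∑ i ∈ univ.erase k, a i) + 1 - a k)

/-- `step x y` holds when `x` is a solution of `F_3 = 0` and `y` is a permutation of
one of its neighbors. -/
def step (x y : Fin 3 → ℤ) : Prop :=
  F x = 0 ∧ ∃ (k : Fin 3) (σ : Equiv.Perm (Fin 3)), y = nbr x k ∘ σ

section Neighbor

variable {n : ℕ} (x : Fin n → ℤ) (k : Fin n)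

lemma nbr_apply_self : nbr x k k = 2 * ∑ i ∈ univ.erase k, x i + 1 - x k :=
  Function.update_self ..

lemma nbr_apply_of_ne {i : Fin n} (h : i ≠ k) : nbr x k i = x i :=
  Function.update_of_ne h ..

lemma sum_erase_nbr : ∑ i ∈ univ.erase k, nbr x k i = ∑ i ∈ univ.erase k, x i :=
  sum_congr rfl fun _ hi => by rw [nbr_apply_of_ne x k (ne_of_mem_erase hi)]

lemma sum_erase_nbr_sq : ∑ i ∈ univ.erase k, nbr x k i ^ 2 = ∑ i ∈ univ.erase k, x i ^ 2 :=
  sum_congr rfl fun _ hi => by rw [nbr_apply_of_ne x k (ne_of_mem_erase hi)]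

lemma sum_nbr : ∑ i, nbr x k i = ∑ i, x i + (nbr x k k - x k) := by
  rw [← add_sum_erase _ _ (mem_univ k), ← add_sum_erase _ x (mem_univ k),
    sum_erase_nbr x k]
  ring

lemma sum_nbr_lt_sum (h : ∑ i ∈ univ.erase k, x i < x k) : ∑ i, nbr x k i < ∑ i, x i := by
  rw [sum_nbr, nbr_apply_self]
  linarith

lemma nbr_nbr : nbr (nbr x k) k = x := by
  funext i
  rcases eq_or_ne i k with rfl | h
  · rw [nbr_apply_self, sum_erase_nbr x i, nbr_apply_self]
    simp
  · rw [nbr_apply_of_ne _ _ h, nbr_apply_of_ne _ _ h]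

end Neighbor

section Quadratic

variable (x : Fin 3 → ℤ) (k : Fin 3)

lemma F_fin_three :
    F x = (x 0 + x 1 + x 2) ^ 2 - (x 0 + x 1 + x 2) - 4 * (x 0 * x 1 + x 0 * x 2 + x 1 * x 2) := by
  simp [F, Fin.sum_univ_three]

lemma F_eq_quadratic :
    F x = x k ^ 2 - (2 * ∑ i ∈ univ.erase k, x i + 1) * x k +
      (2 * ∑ i ∈ univ.erase k, x i ^ 2 - (∑ i ∈ univ.erase k, x i) ^ 2 -
        ∑ i ∈ univ.erase k, x i) := by
  have hF : F x = 2 * ∑ i, x i ^ 2 - (∑ i, x i) ^ 2 - ∑ i, x i := by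
    rw [F_fin_three]
    simp only [Fin.sum_univ_three]
    ring
  rw [hF, ← add_sum_erase _ x (mem_univ k), ← add_sum_erase _ (x · ^ 2) (mem_univ k)]
  ring

lemma F_nbr : F (nbr x k) = F x := by
  rw [F_eq_quadratic _ k, F_eq_quadratic x k, nbr_apply_self, sum_erase_nbr x k,
    sum_erase_nbr_sq x k]
  ring

lemma quadratic_le_F :
    x k ^ 2 - (2 * ∑ i ∈ univ.erase k, x i + 1) * x k - ∑ i ∈ univ.erase k, x i ≤ F x := by
  have hcs := sq_sum_le_card_mul_sum_sq (s := univ.erase k) (f := x)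
  rw [card_erase_of_mem (mem_univ k), card_univ, Fintype.card_fin] at hcs
  rw [F_eq_quadratic x k]
  push_cast at hcs
  linarith

lemma F_le_of_isMax (hx : ∀ i, 0 ≤ x i) (hk : ∀ i, x i ≤ x k) :
    F x ≤ 2 * x k ^ 2 - (2 * ∑ i ∈ univ.erase k, x i + 1) * x k - ∑ i ∈ univ.erase k, x i := by
  have hq : ∑ i ∈ univ.erase k, x i ^ 2 ≤ x k * ∑ i ∈ univ.erase k, x i := by
    rw [mul_sum]
    exact sum_le_sum fun i _ => by nlinarith [hx i, hk i]
  rw [F_eq_quadratic x k]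
  nlinarith [sq_nonneg (x k - ∑ i ∈ univ.erase k, x i)]

end Quadratic

section Descent

variable {x : Fin 3 → ℤ}

lemma nonneg_of_F_eq_zero (hF : F x = 0) (hs : 0 < 1 + ∑ i, x i) (k : Fin 3) : 0 ≤ x k := by
  rw [← add_sum_erase _ x (mem_univ k)] at hs
  by_contra! hk
  nlinarith [quadratic_le_F x k]

lemma nbr_nonneg (hF : F x = 0) (hx : ∀ i, 0 ≤ x i) (k : Fin 3) (i : Fin 3) :
    0 ≤ nbr x k i := by
  have ht : 0 ≤ ∑ i ∈ univ.erase k, x i := sum_nonneg fun i _ => hx i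
  have hk : x k < 3 * ∑ i ∈ univ.erase k, x i + 2 := by
    by_contra! hk
    nlinarith [quadratic_le_F x k]
  refine nonneg_of_F_eq_zero (F_nbr x k ▸ hF) ?_ i
  rw [← add_sum_erase _ _ (mem_univ k), nbr_apply_self, sum_erase_nbr x k]
  linarith

lemma sum_erase_lt_of_isMax (hF : F x = 0) (hx : ∀ i, 0 ≤ x i) {k : Fin 3}
    (hk : ∀ i, x i ≤ x k) (hk0 : x k ≠ 0) : ∑ i ∈ univ.erase k, x i < x k := by
  have ht : 0 ≤ ∑ i ∈ univ.erase k, x i := sum_nonneg fun i _ => hx i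
  have hk1 : 1 ≤ x k := by have := hx k; omega
  by_contra! h
  nlinarith [F_le_of_isMax x k hx hk]

lemma step_nbr_self (hF : F x = 0) (k : Fin 3) : step (nbr x k) x :=
  ⟨F_nbr x k ▸ hF, k, Equiv.refl _, by rw [nbr_nbr]; rfl⟩

theorem reflTransGen_zero_of_nonneg (x : Fin 3 → ℤ) (hF : F x = 0) (hx : ∀ i, 0 ≤ x i) :
    Relation.ReflTransGen step (fun _ => 0) x := by
  obtain ⟨k, hk⟩ := Finite.exists_max x
  by_cases hk0 : x k = 0
  · obtain rfl : x = fun _ => 0 := funext fun i => le_antisymm (hk0 ▸ hk i) (hx i)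
    exact .refl
  have hlt := sum_nbr_lt_sum x k (sum_erase_lt_of_isMax hF hx hk hk0)
  have hy := nbr_nonneg hF hx k
  exact (reflTransGen_zero_of_nonneg (nbr x k) (F_nbr x k ▸ hF) hy).tail (step_nbr_self hF k)
termination_by (∑ i, x i).toNat
decreasing_by
  have := sum_nonneg fun i (_ : i ∈ univ) => hy i
  omega

lemma nonneg_of_reflTransGen_zero {y : Fin 3 → ℤ}
    (h : Relation.ReflTransGen step (fun _ => 0) y) (i : Fin 3) : 0 ≤ y i := by
  induction h generalizing i with
  | refl => rfl
  | tail _ hbc ih =>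
    obtain ⟨hF, k, σ, rfl⟩ := hbc
    exact nbr_nonneg hF ih k (σ i)

end Descent

def reflect {n : ℕ} (x : Fin n → ℤ) : Fin n → ℤ := fun i => -1 - x i

lemma F_reflect (x : Fin 3 → ℤ) : F (reflect x) = F x := by
  simp only [F_fin_three, reflect]
  ring

lemma nbr_reflect (x : Fin 3 → ℤ) (k : Fin 3) : nbr (reflect x) k = reflect (nbr x k) := by
  funext i
  rcases eq_or_ne i k with rfl | h
  · simp only [nbr_apply_self, reflect, sum_sub_distrib, sum_const, card_erase_of_mem (mem_univ _),
      card_univ, Fintype.card_fin, nsmul_eq_mul]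
    push_cast
    ring
  · simp [reflect, nbr_apply_of_ne _ _ h]

lemma step_reflect {x y : Fin 3 → ℤ} (h : step x y) : step (reflect x) (reflect y) := by
  obtain ⟨hF, k, σ, rfl⟩ := h
  exact ⟨F_reflect x ▸ hF, k, σ, by rw [nbr_reflect]; rfl⟩

lemma four_dvd_of_F_eq_zero {n : ℕ} {x : Fin n → ℤ} (hF : F x = 0) :
    4 ∣ (∑ i, x i) ^ 2 - ∑ i, x i :=
  ⟨_, by rw [F, sub_eq_zero] at hF; exact hF⟩

lemma neg_of_F_eq_zero {x : Fin 3 → ℤ} (hF : F x = 0) (hs : 1 + ∑ i, x i < 0) (k : Fin 3) :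
    x k < 0 := by
  have hs2 : ∑ i, x i ≠ -2 := fun h => by
    have h4 := four_dvd_of_F_eq_zero hF
    norm_num [h] at h4
  have hs' : 0 < 1 + ∑ i, reflect x i := by
    simp only [reflect, sum_sub_distrib, sum_const, card_univ, Fintype.card_fin, nsmul_eq_mul]
    omega
  have := nonneg_of_F_eq_zero (F_reflect x ▸ hF) hs' k
  simp only [reflect] at this
  linarith

theorem reflTransGen_neg_one_of_neg (x : Fin 3 → ℤ) (hF : F x = 0) (hx : ∀ i, x i < 0) :
    Relation.ReflTransGen step (fun _ => -1) x := by
  have h : Relation.ReflTransGen step (reflect fun _ => 0) (reflect (reflect x)) :=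
    (reflTransGen_zero_of_nonneg (reflect x) (F_reflect x ▸ hF)
      fun i => by simp only [reflect]; linarith [hx i]).lift reflect fun _ _ => step_reflect
  convert h using 1 <;> funext i <;> simp [reflect]

/-- (1) Solutions of `F_3 = 0` with `1 + s > 0` are exactly the 3-color fair games and
those with `1 + s < 0` have all coordinates negative. (2) Every fair game is connected
to `(0,0,0)` and every all-negative solution to `(−1,−1,−1)`, while the two base points
are not connected: `S_3` has exactly two components. -/
theorem stmt_9 :
    (∀ x : Fin 3 → ℤ, F x = 0 →
      (0 < 1 + ∑ i, x i → ∀ i, 0 ≤ x i) ∧ (1 + ∑ i, x i < 0 → ∀ i, x i < 0)) ∧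
    (∀ x : Fin 3 → ℤ, F x = 0 → (∀ i, 0 ≤ x i) →
      Relation.ReflTransGen step (fun _ => 0) x) ∧
    (∀ x : Fin 3 → ℤ, F x = 0 → (∀ i, x i < 0) →
      Relation.ReflTransGen step (fun _ => -1) x) ∧
    ¬ Relation.ReflTransGen step (fun _ => 0) (fun _ => -1) :=
  ⟨fun _ hF => ⟨nonneg_of_F_eq_zero hF, neg_of_F_eq_zero hF⟩, reflTransGen_zero_of_nonneg,
    reflTransGen_neg_one_of_neg, fun h => by simpa using nonneg_of_reflTransGen_zero h 0⟩
end

section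
/- Let c ≥ 0 be an integer and suppose u, v ∈ ℤ satisfy u^2 − (2c+1)v + c(c−1) = 0. Then v = (u^2 + c(c−1))/(2c+1) and |u| ≤ v. -/
/-! Multiplying `|u| ≤ v` by `2c + 1 > 0` and completing the square turns it into
`0 ≤ (|u| - c) (|u| - c - 1)`, which holds because a product of two consecutive integers is
never negative. -/

lemma Int.mul_sub_one_nonneg (n : ℤ) : 0 ≤ n * (n - 1) := by
  rcases le_or_gt n 0 with hn | hn
  · exact mul_nonneg_of_nonpos_of_nonpos hn (by omega)
  · exact mul_nonneg hn.le (by omega)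

lemma Int.abs_le_of_sq_add_mul_sub_one_eq_mul {c u v : ℤ} (hc : 0 ≤ c)
    (h : u ^ 2 + c * (c - 1) = (2 * c + 1) * v) : |u| ≤ v := by
  have key : (2 * c + 1) * (v - |u| + 1) = (|u| - c) * (|u| - c - 1) + 1 := by
    linear_combination -h - sq_abs u
  have hpos : 0 < (2 * c + 1) * (v - |u| + 1) := by
    rw [key]
    linarith [Int.mul_sub_one_nonneg (|u| - c)]
  have := pos_of_mul_pos_right hpos (by omega)
  omega

/-- If `c ≥ 0` and `u² − (2c+1)v + c(c−1) = 0`, then `v = (u² + c(c−1))/(2c+1)` and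
`|u| ≤ v`. -/
theorem stmt_11 (c u v : ℤ) (hc : 0 ≤ c)
    (h : u ^ 2 - (2 * c + 1) * v + c * (c - 1) = 0) :
    v = (u ^ 2 + c * (c - 1)) / (2 * c + 1) ∧ |u| ≤ v := by
  have hv : u ^ 2 + c * (c - 1) = (2 * c + 1) * v := by linarith
  exact ⟨by rw [hv, Int.mul_ediv_cancel_left _ (by omega)],
    Int.abs_le_of_sq_add_mul_sub_one_eq_mul hc hv⟩
end

section
/- Let c ≥ 0 be an integer. If u ∈ ℤ satisfies (2c+1) ∣ (u^2 + c(c−1)), then x_1 = (u^2 + (2c+1)u + c(c−1))/(2(2c+1)) and x_2 = (u^2 − (2c+1)u + c(c−1))/(2(2c+1)) are non-negative integers and (x_1, x_2, c) is a 3-color fair game. Conversely, every 3-color fair game arises this way: if (x_1, x_2, c) is a 3-color fair game, then u = x_1 − x_2 satisfies (2c+1) ∣ (u^2 + c(c−1)) and x_1, x_2 are given by the displayed formulas. -/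
/-- `F_3` evaluated on a triple. -/
def F3 (x y z : ℤ) : ℤ :=
  (x + y + z) ^ 2 - (x + y + z) - 4 * (x * y + y * z + z * x)

/-!
In terms of `u = x - y`, `F3 x y c = u² + c(c-1) - (2c+1)(x+y)`. So a solution with third
coordinate `c` has `x + y = (u² + c(c-1))/(2c+1)` and `x = ((x+y) + u)/2`, `y = ((x+y) - u)/2`.
The halving is exact because `u² + (2c+1)u + c(c-1) = u(u+1) + 2cu + c(c-1)` is even and
`2c+1` is odd, and the coordinates are non-negative because
`(2u + 2c + 1)² = 8(2c+1)x + 8c + 1`.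
-/

theorem F3_eq_zero_iff {x y c : ℤ} :
    F3 x y c = 0 ↔ (x - y) ^ 2 + c * (c - 1) = (2 * c + 1) * (x + y) := by
  unfold F3
  constructor <;> intro h <;> linear_combination h

theorem F3_comm (x y c : ℤ) : F3 x y c = F3 y x c := by
  unfold F3
  ring

theorem two_mul_dvd_sq_add_mul_add {c u : ℤ} (h : 2 * c + 1 ∣ u ^ 2 + c * (c - 1)) :
    2 * (2 * c + 1) ∣ u ^ 2 + (2 * c + 1) * u + c * (c - 1) := by
  have hodd : IsCoprime 2 (2 * c + 1) := Int.isCoprime_two_left.mpr (odd_two_mul_add_one c)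
  refine hodd.mul_dvd ?_ ?_
  · have h2 : 2 ∣ u * (u + 1) + c * (c - 1) :=
      dvd_add (Int.two_dvd_mul_add_one u) (Int.even_mul_pred_self c).two_dvd
    have : u ^ 2 + (2 * c + 1) * u + c * (c - 1) = u * (u + 1) + c * (c - 1) + 2 * (c * u) := by
      ring
    rw [this]
    exact dvd_add h2 (dvd_mul_right 2 _)
  · have : u ^ 2 + (2 * c + 1) * u + c * (c - 1) = u ^ 2 + c * (c - 1) + (2 * c + 1) * u := by
      ring
    rw [this]
    exact dvd_add h (dvd_mul_right _ u)

theorem nonneg_of_two_mul_mul_eq {c u m : ℤ} (hc : 0 ≤ c)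
    (hm : 2 * (2 * c + 1) * m = u ^ 2 + (2 * c + 1) * u + c * (c - 1)) : 0 ≤ m := by
  have hsq : (2 * u + 2 * c + 1) ^ 2 = 8 * (2 * c + 1) * m + 8 * c + 1 := by
    linear_combination -4 * hm
  nlinarith [sq_nonneg (2 * u + 2 * c + 1)]

theorem F3_eq_zero_of_two_mul_mul_eq {c u m m' : ℤ}
    (hm : 2 * (2 * c + 1) * m = u ^ 2 + (2 * c + 1) * u + c * (c - 1))
    (hm' : 2 * (2 * c + 1) * m' = (-u) ^ 2 + (2 * c + 1) * (-u) + c * (c - 1)) :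
    F3 m m' c = 0 := by
  have hn : 2 * (2 * c + 1) ≠ 0 := by omega
  have hdiff : m - m' = u :=
    mul_left_cancel₀ hn (by linear_combination hm - hm')
  have hsum : (2 * c + 1) * (m + m') = u ^ 2 + c * (c - 1) :=
    mul_left_cancel₀ two_ne_zero (by linear_combination hm + hm')
  rw [F3_eq_zero_iff, hdiff, hsum]

theorem two_mul_mul_eq_of_F3_eq_zero {x y c : ℤ} (h : F3 x y c = 0) :
    2 * (2 * c + 1) * x = (x - y) ^ 2 + (2 * c + 1) * (x - y) + c * (c - 1) := by
  linear_combination -F3_eq_zero_iff.mp h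

/-- Parametrization of the 3-color fair games with third coordinate `c`: for
`u² ≡ −c(c−1) (mod 2c+1)`, the numbers `x₁ = (u² + (2c+1)u + c(c−1))/(2(2c+1))` and
`x₂ = (u² − (2c+1)u + c(c−1))/(2(2c+1))` are non-negative integers and `(x₁, x₂, c)`
is a 3-color fair game; conversely every 3-color fair game `(x₁, x₂, c)` arises this
way with `u = x₁ − x₂`. -/
theorem stmt_12 (c : ℤ) (hc : 0 ≤ c) :
    (∀ u : ℤ, (2 * c + 1) ∣ (u ^ 2 + c * (c - 1)) →
      (2 * (2 * c + 1)) ∣ (u ^ 2 + (2 * c + 1) * u + c * (c - 1)) ∧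
      (2 * (2 * c + 1)) ∣ (u ^ 2 - (2 * c + 1) * u + c * (c - 1)) ∧
      0 ≤ (u ^ 2 + (2 * c + 1) * u + c * (c - 1)) / (2 * (2 * c + 1)) ∧
      0 ≤ (u ^ 2 - (2 * c + 1) * u + c * (c - 1)) / (2 * (2 * c + 1)) ∧
      F3 ((u ^ 2 + (2 * c + 1) * u + c * (c - 1)) / (2 * (2 * c + 1)))
         ((u ^ 2 - (2 * c + 1) * u + c * (c - 1)) / (2 * (2 * c + 1))) c = 0) ∧
    (∀ x1 x2 : ℤ, 0 ≤ x1 → 0 ≤ x2 → F3 x1 x2 c = 0 →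
      (2 * c + 1) ∣ ((x1 - x2) ^ 2 + c * (c - 1)) ∧
      x1 = ((x1 - x2) ^ 2 + (2 * c + 1) * (x1 - x2) + c * (c - 1)) / (2 * (2 * c + 1)) ∧
      x2 = ((x1 - x2) ^ 2 - (2 * c + 1) * (x1 - x2) + c * (c - 1)) / (2 * (2 * c + 1))) := by
  have hn : 2 * (2 * c + 1) ≠ 0 := by omega
  have hneg (u : ℤ) : u ^ 2 - (2 * c + 1) * u + c * (c - 1) =
      (-u) ^ 2 + (2 * c + 1) * (-u) + c * (c - 1) := by ring
  refine ⟨fun u hu => ?_, fun x1 x2 _ _ hF => ?_⟩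
  · obtain ⟨m, hm⟩ := two_mul_dvd_sq_add_mul_add hu
    obtain ⟨m', hm'⟩ := two_mul_dvd_sq_add_mul_add (u := -u) (by rwa [neg_sq])
    rw [hneg, hm, hm', Int.mul_ediv_cancel_left _ hn, Int.mul_ediv_cancel_left _ hn]
    exact ⟨dvd_mul_right _ _, dvd_mul_right _ _, nonneg_of_two_mul_mul_eq hc hm.symm,
      nonneg_of_two_mul_mul_eq hc hm'.symm, F3_eq_zero_of_two_mul_mul_eq hm.symm hm'.symm⟩
  · have hx1 := two_mul_mul_eq_of_F3_eq_zero hF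
    have hx2 := two_mul_mul_eq_of_F3_eq_zero ((F3_comm x1 x2 c).symm.trans hF)
    refine ⟨⟨x1 + x2, F3_eq_zero_iff.mp hF⟩, ?_, ?_⟩
    · rw [← hx1, Int.mul_ediv_cancel_left _ hn]
    · rw [hneg, neg_sub, ← hx2, Int.mul_ediv_cancel_left _ hn]
end

section
/- The map (x_1, x_2, x_3) ↦ (2(x_2 − x_3), 2(x_1 − x_2 − x_3) − 1, 2(x_2 + x_3 + 1)) is a bijection from {x ∈ ℤ^3 : F_3(x) = 0} onto {w ∈ ℤ^3 : w_1^2 + w_2^2 − w_3^2 = −3 and w_2 is odd}, with inverse x_1 = (w_2 + w_3 − 1)/2, x_2 = (w_1 + w_3 − 2)/4, x_3 = (w_3 − w_1 − 2)/4. Moreover, for a solution x with x_1 ≤ x_2 ≤ x_3, all coordinates of x are non-negative (i.e., x is a 3-color fair game) if and only if its image w satisfies w_1 ≤ 0, w_2 ≤ 0 and w_3 ≥ 0. -/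
/-- The affine map from the fair-game equation to the Lorentzian form
`w₁² + w₂² − w₃² = −3`. -/
def phi (x : ℤ × ℤ × ℤ) : ℤ × ℤ × ℤ :=
  (2 * (x.2.1 - x.2.2), 2 * (x.1 - x.2.1 - x.2.2) - 1, 2 * (x.2.1 + x.2.2 + 1))

def phiInv (w : ℤ × ℤ × ℤ) : ℤ × ℤ × ℤ :=
  ((w.2.1 + w.2.2 - 1) / 2, (w.1 + w.2.2 - 2) / 4, (w.2.2 - w.1 - 2) / 4)

theorem phi_lorentz (x : ℤ × ℤ × ℤ) :
    (phi x).1 ^ 2 + (phi x).2.1 ^ 2 - (phi x).2.2 ^ 2 = 4 * F3 x.1 x.2.1 x.2.2 - 3 := by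
  simp only [phi, F3]
  ring

theorem odd_phi_snd (x : ℤ × ℤ × ℤ) : Odd (phi x).2.1 :=
  ⟨x.1 - x.2.1 - x.2.2 - 1, by simp only [phi]; ring⟩

theorem phiInv_phi (x : ℤ × ℤ × ℤ) : phiInv (phi x) = x := by
  obtain ⟨a, b, c⟩ := x
  simp only [phiInv, phi, Prod.mk.injEq]
  omega

theorem phi_injective : Function.Injective phi :=
  Function.LeftInverse.injective phiInv_phi

/-- The conclusions `4 * n = 0` and `2 * n = 0` in `ZMod 8` encode `2 ∣ n` and `4 ∣ n` over `ℤ`. -/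
theorem lorentz_residues_mod_eight :
    ∀ a k c : ZMod 8, a ^ 2 + (2 * k + 1) ^ 2 - c ^ 2 = -3 →
      4 * (2 * k + 1 + c - 1) = 0 ∧ 2 * (a + c - 2) = 0 ∧ 2 * (c - a - 2) = 0 := by
  decide

theorem dvd_of_lorentz {w₁ w₂ w₃ : ℤ} (h : w₁ ^ 2 + w₂ ^ 2 - w₃ ^ 2 = -3) (hw₂ : Odd w₂) :
    2 ∣ w₂ + w₃ - 1 ∧ 4 ∣ w₁ + w₃ - 2 ∧ 4 ∣ w₃ - w₁ - 2 := by
  obtain ⟨k, rfl⟩ := hw₂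
  have h8 := congrArg (Int.cast : ℤ → ZMod 8) h
  push_cast at h8
  obtain ⟨h₁, h₂, h₃⟩ := lorentz_residues_mod_eight _ _ _ h8
  have hdvd (n : ℤ) : (n : ZMod 8) = 0 → (8 : ℤ) ∣ n := (ZMod.intCast_zmod_eq_zero_iff_dvd n 8).mp
  have := hdvd (4 * (2 * k + 1 + w₃ - 1)) (by push_cast; exact h₁)
  have := hdvd (2 * (w₁ + w₃ - 2)) (by push_cast; exact h₂)
  have := hdvd (2 * (w₃ - w₁ - 2)) (by push_cast; exact h₃)
  omega

theorem phi_phiInv {w : ℤ × ℤ × ℤ} (h : w.1 ^ 2 + w.2.1 ^ 2 - w.2.2 ^ 2 = -3)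
    (hw : Odd w.2.1) : phi (phiInv w) = w := by
  obtain ⟨w₁, w₂, w₃⟩ := w
  have := dvd_of_lorentz h hw
  dsimp only [phi, phiInv] at this ⊢
  simp only [Prod.mk.injEq]
  omega

theorem F3_eq_zero_iff_lorentz (x : ℤ × ℤ × ℤ) :
    F3 x.1 x.2.1 x.2.2 = 0 ↔ (phi x).1 ^ 2 + (phi x).2.1 ^ 2 - (phi x).2.2 ^ 2 = -3 := by
  rw [phi_lorentz]
  omega

theorem bijOn_phi :
    Set.BijOn phi {x : ℤ × ℤ × ℤ | F3 x.1 x.2.1 x.2.2 = 0}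
      {w : ℤ × ℤ × ℤ | w.1 ^ 2 + w.2.1 ^ 2 - w.2.2 ^ 2 = -3 ∧ Odd w.2.1} := by
  refine ⟨fun x hx => ⟨(F3_eq_zero_iff_lorentz x).mp hx, odd_phi_snd x⟩,
    phi_injective.injOn, ?_⟩
  rintro w ⟨h, hw⟩
  have hphi := phi_phiInv h hw
  refine ⟨phiInv w, ?_, hphi⟩
  show F3 _ _ _ = 0
  rw [F3_eq_zero_iff_lorentz, hphi]
  exact h

theorem mul_pos_of_F3_eq_zero {x y z : ℤ} (h : F3 x y z = 0) : 0 < (2 * y + 1) * (2 * z + 1) := by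
  have key : 4 * ((2 * y + 1) * (2 * z + 1)) = (2 * (x - y - z) - 1) ^ 2 + 3 - 4 * F3 x y z := by
    simp only [F3]
    ring
  nlinarith [sq_nonneg (2 * (x - y - z) - 1)]

theorem F3_pos_of_neg {x y z : ℤ} (hx : x < 0) (hy : 0 ≤ y) (hz : 0 ≤ z) : 0 < F3 x y z := by
  have key : F3 x y z = x * (x - 2 * (y + z) - 1) + (y - z) ^ 2 - (y + z) := by
    simp only [F3]
    ring
  nlinarith [sq_nonneg (y - z)]

theorem nonneg_iff_phi {x y z : ℤ} (h : F3 x y z = 0) (hxy : x ≤ y) (hyz : y ≤ z) :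
    (0 ≤ x ∧ 0 ≤ y ∧ 0 ≤ z) ↔
      ((phi (x, y, z)).1 ≤ 0 ∧ (phi (x, y, z)).2.1 ≤ 0 ∧ 0 ≤ (phi (x, y, z)).2.2) := by
  simp only [phi]
  refine ⟨fun ⟨hx, hy, hz⟩ => ⟨by omega, by omega, by omega⟩, fun ⟨_, _, hw₃⟩ => ?_⟩
  have hy : 0 ≤ y := by
    rcases pos_and_pos_or_neg_and_neg_of_mul_pos (mul_pos_of_F3_eq_zero h) with hp | hn <;> omega
  have hx : 0 ≤ x := by
    by_contra! hx
    exact (F3_pos_of_neg hx hy (hy.trans hyz)).ne' h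
  exact ⟨hx, hy, hy.trans hyz⟩

/-- `phi` is a bijection from the solutions of `F_3 = 0` onto the solutions of
`w₁² + w₂² − w₃² = −3` with `w₂` odd, with the displayed inverse; under it, an
ascending solution is a fair game iff its image satisfies `w₁, w₂ ≤ 0 ≤ w₃`. -/
theorem stmt_17 :
    Set.BijOn phi {x : ℤ × ℤ × ℤ | F3 x.1 x.2.1 x.2.2 = 0}
      {w : ℤ × ℤ × ℤ | w.1 ^ 2 + w.2.1 ^ 2 - w.2.2 ^ 2 = -3 ∧ Odd w.2.1} ∧
    (∀ x : ℤ × ℤ × ℤ, F3 x.1 x.2.1 x.2.2 = 0 →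
      x.1 = ((phi x).2.1 + (phi x).2.2 - 1) / 2 ∧
      x.2.1 = ((phi x).1 + (phi x).2.2 - 2) / 4 ∧
      x.2.2 = ((phi x).2.2 - (phi x).1 - 2) / 4) ∧
    (∀ x : ℤ × ℤ × ℤ, F3 x.1 x.2.1 x.2.2 = 0 → x.1 ≤ x.2.1 → x.2.1 ≤ x.2.2 →
      ((0 ≤ x.1 ∧ 0 ≤ x.2.1 ∧ 0 ≤ x.2.2) ↔
        ((phi x).1 ≤ 0 ∧ (phi x).2.1 ≤ 0 ∧ 0 ≤ (phi x).2.2))) := by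
  refine ⟨bijOn_phi, fun x _ => ?_, fun ⟨x, y, z⟩ h hxy hyz => nonneg_iff_phi h hxy hyz⟩
  have := phiInv_phi x
  simp only [phiInv, Prod.ext_iff] at this
  exact ⟨this.1.symm, this.2.1.symm, this.2.2.symm⟩
end

section
/- There exist positive real constants c_1, c_2 and a threshold K such that for all natural numbers k ≥ K, the number of triples (x_1, x_2, x_3) ∈ ℤ^3 with x_1 ≤ x_2 ≤ x_3, F_3(x) = 0 and x_1^2 + x_2^2 + x_3^2 ≤ k^2 lies between c_1·k and c_2·k; the same holds (possibly with different constants) for the number of 3-color fair games (x_1, x_2, x_3) with x_1 ≤ x_2 ≤ x_3 and x_1^2 + x_2^2 + x_3^2 ≤ k^2. That is, |S_3(k)| = Θ(k) and |F_3(k)| = Θ(k). -/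
/-!
With `j = z - x - y - 1` one has `F₃(x, y, z) = j² + j + 1 - (2x + 1)(2y + 1)`, so solutions are
factorisations `v w` of the Eisenstein norm `j² + j + 1 = N(j - ω)`. As `ℤ[ω]` is a principal
ideal domain, the factor `v` is the norm `a² + ab + b²` of a generator `a - bω` of the ideal
`(v, j - ω)`. For `|v| ≤ |w|`, a solution is determined by the sign of `x`, the pair `(a, b)` and
`q = ⌊j / v⌋`, and the norm bound forces `(|q| + 1)²(a² + b²) = O(k)`, a region containing `O(k)`
lattice points. Conversely, every coprime pair `1 ≤ a, b ≤ √k / 3` generates such an ideal for a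
distinct fair game of norm at most `k`, and a positive proportion of these pairs is coprime.
-/

open Finset

lemma Set.ncard_le_ncard_of_forall_subsingleton {α β : Type*} {s : Set α} {t : Set β}
    (r : α → β → Prop) (hs : ∀ a ∈ s, ∃ b ∈ t, r a b)
    (ht : ∀ b ∈ t, {a ∈ s | r a b}.Subsingleton) (htf : t.Finite) : s.ncard ≤ t.ncard := by
  rcases s.eq_empty_or_nonempty with rfl | ⟨a₀, ha₀⟩
  · simp
  have : Nonempty β := ⟨(hs a₀ ha₀).choose⟩
  choose! f hft hfr using hs
  exact Set.ncard_le_ncard_of_injOn f hft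
    (fun a ha a' ha' h => ht (f a) (hft a ha) ⟨ha, hfr a ha⟩ ⟨ha', h ▸ hfr a' ha'⟩) htf

lemma isCoprime_eisNorm_right {a b : ℤ} (hab : IsCoprime a b) :
    IsCoprime (a ^ 2 + a * b + b ^ 2) b := by
  have := (hab.symm.pow_right (n := 2)).add_mul_left_right (a + b)
  rw [show a ^ 2 + b * (a + b) = a ^ 2 + a * b + b ^ 2 by ring] at this
  exact this.symm

/-- With `ω² + ω + 1 = 0`, this says that `a - bω` generates the ideal `(v, j - ω)` of `ℤ[ω]`. -/
def IsEisensteinRep (v j a b : ℤ) : Prop :=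
  IsCoprime a b ∧ a ^ 2 + a * b + b ^ 2 = v ∧ v ∣ j * b - a

namespace IsEisensteinRep

variable {v j a b : ℤ}

lemma isCoprime_right (h : IsEisensteinRep v j a b) : IsCoprime v b :=
  h.2.1 ▸ isCoprime_eisNorm_right h.1

lemma dvd (h : IsEisensteinRep v j a b) : v ∣ j ^ 2 + j + 1 := by
  have hb := h.isCoprime_right.pow_right (n := 2)
  obtain ⟨-, hv, hd⟩ := h
  refine hb.dvd_of_dvd_mul_right ?_
  have : (j ^ 2 + j + 1) * b ^ 2 = v + (j * b - a) * (j * b + a + b) := by rw [← hv]; ring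
  rw [this]
  exact dvd_add dvd_rfl (hd.mul_right _)

lemma of_modEq {j' : ℤ} (h : IsEisensteinRep v j a b) (hj : j ≡ j' [ZMOD v]) :
    IsEisensteinRep v j' a b := by
  obtain ⟨hab, hv, hd⟩ := h
  refine ⟨hab, hv, ?_⟩
  have : j' * b - a = (j' - j) * b + (j * b - a) := by ring
  rw [this]
  exact dvd_add ((Int.modEq_iff_dvd.1 hj).mul_right b) hd

lemma modEq {v' j' : ℤ} (h : IsEisensteinRep v j a b) (h' : IsEisensteinRep v' j' a b) :
    v' = v ∧ j ≡ j' [ZMOD v] := by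
  have hv : v' = v := h'.2.1.symm.trans h.2.1
  refine ⟨hv, Int.modEq_iff_dvd.2 (h.isCoprime_right.dvd_of_dvd_mul_right ?_)⟩
  have : (j' - j) * b = (j' * b - a) - (j * b - a) := by ring
  rw [this]
  exact dvd_sub (hv ▸ h'.2.2) h.2.2

/-- `ad ≡ cb (mod v)` and `0 < ad, cb < v`. -/
lemma eq_of_pos {c d : ℤ} (h : IsEisensteinRep v j a b) (h' : IsEisensteinRep v j c d)
    (ha : 0 < a) (hb : 0 < b) (hc : 0 < c) (hd : 0 < d) : a = c ∧ b = d := by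
  obtain ⟨hab, hv, hdvd⟩ := h
  obtain ⟨hcd, hv', hdvd'⟩ := h'
  have hmod : v ∣ c * b - a * d := by
    have : c * b - a * d = (j * b - a) * d - (j * d - c) * b := by ring
    rw [this]
    exact dvd_sub (hdvd.mul_right d) (hdvd'.mul_right b)
  have had : a * d < v := by nlinarith [mul_pos ha hd]
  have hcb : c * b < v := by nlinarith [mul_pos hc hb]
  have heq : a * d = c * b := by
    obtain ⟨m, hm⟩ := hmod
    obtain rfl : m = 0 := by nlinarith [mul_pos ha hd, mul_pos hc hb]
    linarith
  have hac : a = c := Int.dvd_antisymm ha.le hc.le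
    (hab.dvd_of_dvd_mul_right ⟨d, heq.symm⟩) (hcd.dvd_of_dvd_mul_right ⟨b, heq⟩)
  subst hac
  exact ⟨rfl, (mul_left_cancel₀ ha.ne' heq).symm⟩

/-- `a - bω = (j - ω) / (a₀ - b₀ω)`. -/
lemma cofactor {w a₀ b₀ : ℤ} (h : IsEisensteinRep w j a₀ b₀) (hw : w ≠ 0)
    (hvw : v * w = j ^ 2 + j + 1) : ∃ a b, IsEisensteinRep v j a b := by
  obtain ⟨-, hnorm, b, hb⟩ := h
  obtain rfl : a₀ = b₀ * j - w * b := by linarith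
  refine ⟨b₀ * v - j * b, -b, ⟨b₀, b₀ * j - w * b + b₀, mul_left_cancel₀ hw ?_⟩,
    mul_left_cancel₀ (pow_ne_zero 2 hw) ?_, ⟨-b₀, by ring⟩⟩
  · linear_combination hnorm + b₀ ^ 2 * hvw
  · linear_combination (w * v * b₀ ^ 2 - w ^ 2 * b ^ 2) * hvw + w * v * hnorm

end IsEisensteinRep

/-- Descent: reducing `j` modulo `v` makes the cofactor of `v` in `j² + j + 1` smaller than `v`. -/
theorem exists_isEisensteinRep {v j : ℤ} (hv : 0 < v) (hdvd : v ∣ j ^ 2 + j + 1) :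
    ∃ a b, IsEisensteinRep v j a b := by
  rcases (show v = 1 ∨ 1 < v by omega) with rfl | hv1
  · exact ⟨1, 0, isCoprime_one_left, by norm_num, one_dvd _⟩
  have hj : j % v ≡ j [ZMOD v] := Int.mod_modEq j v
  obtain ⟨w, hw⟩ : v ∣ (j % v) ^ 2 + j % v + 1 :=
    Int.modEq_zero_iff_dvd.1 ((((hj.pow 2).add hj).add_right 1).trans
      (Int.modEq_zero_iff_dvd.2 hdvd))
  have h0 := Int.emod_nonneg j hv.ne'
  have h1 := Int.emod_lt_of_pos j hv
  have hw0 : 0 < w := by nlinarith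
  have hwv : w < v := by nlinarith
  obtain ⟨a₀, b₀, h₀⟩ := exists_isEisensteinRep (j := j % v) hw0 ⟨v, by linarith⟩
  obtain ⟨a, b, h⟩ := h₀.cofactor (v := v) hw0.ne' (by linarith)
  exact ⟨a, b, h.of_modEq hj⟩
termination_by v.toNat
decreasing_by omega

lemma exists_isEisensteinRep_of_isCoprime {a b : ℤ} (hab : IsCoprime a b)
    (hv : 0 < a ^ 2 + a * b + b ^ 2) : ∃ r, 0 ≤ r ∧ r < a ^ 2 + a * b + b ^ 2 ∧
      IsEisensteinRep (a ^ 2 + a * b + b ^ 2) r a b := by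
  set v := a ^ 2 + a * b + b ^ 2
  obtain ⟨s, t, hst⟩ := isCoprime_eisNorm_right hab
  refine ⟨t * a % v, Int.emod_nonneg _ hv.ne', Int.emod_lt_of_pos _ hv, hab, rfl, ?_⟩
  have e : t * a % v * b - a = -((t * a - t * a % v) * b) - a * s * v := by
    linear_combination a * hst
  rw [e]
  exact dvd_sub ((Int.mod_modEq (t * a) v).dvd.mul_right b).neg_right (dvd_mul_left v _)

noncomputable def hyperbolicRegion (L : ℕ) : Finset (ℤ × ℤ × ℤ) :=
  (range L).biUnion fun n =>
    let A : ℤ := (L / (n + 1) : ℕ)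
    Icc (-A) A ×ˢ Icc (-A) A ×ˢ {(n : ℤ), -(n : ℤ)}

lemma mem_hyperbolicRegion {M : ℕ} {a b q : ℤ} (hab : 1 ≤ a ^ 2 + b ^ 2)
    (h : (|q| + 1) ^ 2 * (a ^ 2 + b ^ 2) ≤ M) : (a, b, q) ∈ hyperbolicRegion (Nat.sqrt M) := by
  have hle : ∀ c : ℤ, c ^ 2 ≤ a ^ 2 + b ^ 2 → c.natAbs ≤ Nat.sqrt M / (q.natAbs + 1) := by
    intro c hc
    rw [Nat.le_div_iff_mul_le (Nat.succ_pos _), Nat.le_sqrt']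
    have : ((c.natAbs * (q.natAbs + 1)) ^ 2 : ℕ) ≤ (|q| + 1) ^ 2 * (a ^ 2 + b ^ 2) := by
      push_cast [Int.natCast_natAbs, mul_pow, sq_abs]
      nlinarith [sq_nonneg (|q| + 1)]
    exact_mod_cast this.trans h
  simp only [hyperbolicRegion, mem_biUnion, mem_range, mem_product, mem_Icc, mem_insert,
    mem_singleton]
  refine ⟨q.natAbs, ?_, ?_, ?_, Int.natAbs_eq q⟩
  · rw [← Nat.succ_le_iff, Nat.le_sqrt']
    have : (((q.natAbs + 1) ^ 2 : ℕ) : ℤ) ≤ M := by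
      push_cast [Int.natCast_natAbs]
      nlinarith [sq_nonneg (|q| + 1)]
    exact_mod_cast this
  · have := hle a (by nlinarith); omega
  · have := hle b (by nlinarith); omega

lemma sum_range_inv_succ_sq_le (L : ℕ) : ∑ n ∈ range L, (((n : ℚ) + 1) ^ 2)⁻¹ ≤ 2 := by
  have h := sum_Ioo_inv_sq_le (α := ℚ) 0 (L + 1)
  rw [← Ico_add_one_left_eq_Ioo, ← sum_Ico_add', ← range_eq_Ico] at h
  simpa using h

lemma card_hyperbolicRegion_le (L : ℕ) : (hyperbolicRegion L).card ≤ 36 * L ^ 2 := by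
  have hcard : (hyperbolicRegion L).card ≤ ∑ n ∈ range L, (2 * (L / (n + 1)) + 1) ^ 2 * 2 := by
    refine card_biUnion_le.trans (sum_le_sum fun n _ => ?_)
    have hIcc : ∀ A : ℕ, (Icc (-(A : ℤ)) A).card = 2 * A + 1 := fun A => by simp; omega
    simp only [card_product, hIcc, ← mul_assoc, ← sq]
    exact Nat.mul_le_mul_left _ card_le_two
  have hterm : ∀ n ∈ range L, (((2 * (L / (n + 1)) + 1) ^ 2 * 2 : ℕ) : ℚ) ≤
      18 * L ^ 2 * (((n : ℚ) + 1) ^ 2)⁻¹ := by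
    intro n hn
    set A := L / (n + 1)
    have hA : (1 : ℚ) ≤ A := by
      exact_mod_cast (Nat.one_le_div_iff (Nat.succ_pos n)).2 (mem_range.1 hn)
    have hAL : (A : ℚ) * (n + 1) ≤ L := by exact_mod_cast Nat.div_mul_le_self L (n + 1)
    have h9 : (2 * (A : ℚ) + 1) ^ 2 ≤ 9 * A ^ 2 := by nlinarith
    rw [← div_eq_mul_inv, le_div_iff₀ (by positivity)]
    push_cast
    nlinarith [mul_le_mul hAL hAL (by positivity) (by positivity)]
  have : ((hyperbolicRegion L).card : ℚ) ≤ 36 * L ^ 2 :=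
    calc ((hyperbolicRegion L).card : ℚ)
        ≤ ∑ n ∈ range L, (((2 * (L / (n + 1)) + 1) ^ 2 * 2 : ℕ) : ℚ) := by exact_mod_cast hcard
      _ ≤ ∑ n ∈ range L, 18 * (L : ℚ) ^ 2 * (((n : ℚ) + 1) ^ 2)⁻¹ := sum_le_sum hterm
      _ ≤ 18 * (L : ℚ) ^ 2 * 2 := by rw [← mul_sum]; gcongr; exact sum_range_inv_succ_sq_le L
      _ = 36 * L ^ 2 := by ring
  exact_mod_cast this

def coprimePairs (N : ℕ) : Finset (ℕ × ℕ) :=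
  (Icc 1 N ×ˢ Icc 1 N).filter fun p => p.1.Coprime p.2

lemma card_filter_dvd_dvd (N d : ℕ) :
    ((Icc 1 N ×ˢ Icc 1 N).filter fun p => d ∣ p.1 ∧ d ∣ p.2).card = (N / d) ^ 2 := by
  rw [filter_product, card_product, ← zero_add 1, Icc_add_one_left_eq_Ioc,
    Nat.Ioc_filter_dvd_card_eq_div, sq]

lemma filter_not_coprime_subset (N : ℕ) :
    ((Icc 1 N ×ˢ Icc 1 N).filter fun p => ¬ p.1.Coprime p.2) ⊆
      (insert 2 (Ioo 2 (N + 1))).biUnion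
        fun d => (Icc 1 N ×ˢ Icc 1 N).filter fun p => d ∣ p.1 ∧ d ∣ p.2 := by
  intro p hp
  simp only [mem_filter, mem_product, mem_Icc] at hp
  obtain ⟨⟨⟨h1, h1N⟩, h2, h2N⟩, hcop⟩ := hp
  have hg : 2 ≤ p.1.gcd p.2 := by
    have := Nat.gcd_pos_of_pos_left p.2 h1
    unfold Nat.Coprime at hcop
    omega
  have hgN : p.1.gcd p.2 ≤ N := (Nat.gcd_le_left _ h1).trans h1N
  refine mem_biUnion.2 ⟨p.1.gcd p.2, ?_, ?_⟩
  · rw [mem_insert, mem_Ioo]; omega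
  · simp only [mem_filter, mem_product, mem_Icc]
    exact ⟨⟨⟨h1, h1N⟩, h2, h2N⟩, Nat.gcd_dvd_left _ _, Nat.gcd_dvd_right _ _⟩

lemma sq_le_twelve_mul_card_coprimePairs (N : ℕ) : N ^ 2 ≤ 12 * (coprimePairs N).card := by
  set B := (Icc 1 N ×ˢ Icc 1 N).filter fun p => ¬ p.1.Coprime p.2
  have hsplit : ((coprimePairs N).card : ℚ) + B.card = N ^ 2 := by
    rw [coprimePairs, ← Nat.cast_add, card_filter_add_card_filter_not, card_product, Nat.card_Icc]
    push_cast; ring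
  have hterm : ∀ d : ℕ, (((N / d) ^ 2 : ℕ) : ℚ) ≤ N ^ 2 * ((d : ℚ) ^ 2)⁻¹ := fun d => by
    rw [← div_eq_mul_inv, ← div_pow]; push_cast; gcongr; exact Nat.cast_div_le
  have hB : (B.card : ℚ) ≤ 11 / 12 * N ^ 2 :=
    calc (B.card : ℚ) ≤ ∑ d ∈ insert 2 (Ioo 2 (N + 1)), (((N / d) ^ 2 : ℕ) : ℚ) := by
          exact_mod_cast (card_le_card (filter_not_coprime_subset N)).trans
            (card_biUnion_le.trans_eq (sum_congr rfl fun d _ => card_filter_dvd_dvd N d))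
      _ ≤ ∑ d ∈ insert 2 (Ioo 2 (N + 1)), (N : ℚ) ^ 2 * ((d : ℚ) ^ 2)⁻¹ :=
          sum_le_sum fun d _ => hterm d
      _ = (N : ℚ) ^ 2 * (1 / 4 + ∑ d ∈ Ioo 2 (N + 1), ((d : ℚ) ^ 2)⁻¹) := by
          rw [sum_insert (by simp), ← mul_sum]; norm_num; ring
      _ ≤ (N : ℚ) ^ 2 * (1 / 4 + 2 / 3) := by
          gcongr; exact (sum_Ioo_inv_sq_le 2 (N + 1)).trans_eq (by norm_num)
      _ = 11 / 12 * N ^ 2 := by ring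
  have : (N : ℚ) ^ 2 ≤ 12 * (coprimePairs N).card := by linarith
  exact_mod_cast this

lemma F3_eq (x y z : ℤ) :
    F3 x y z = (z - x - y - 1) ^ 2 + (z - x - y - 1) + 1 - (2 * x + 1) * (2 * y + 1) := by
  unfold F3; ring

def orderedSolutions (k : ℕ) : Set (ℤ × ℤ × ℤ) :=
  {x | x.1 ≤ x.2.1 ∧ x.2.1 ≤ x.2.2 ∧ F3 x.1 x.2.1 x.2.2 = 0 ∧
    x.1 ^ 2 + x.2.1 ^ 2 + x.2.2 ^ 2 ≤ (k : ℤ) ^ 2}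

def fairGames (k : ℕ) : Set (ℤ × ℤ × ℤ) :=
  {x | 0 ≤ x.1 ∧ x ∈ orderedSolutions k}

lemma orderedSolutions_finite (k : ℕ) : (orderedSolutions k).Finite := by
  refine (Icc (-(k : ℤ)) k ×ˢ Icc (-(k : ℤ)) k ×ˢ Icc (-(k : ℤ)) k).finite_toSet.subset ?_
  rintro ⟨x, y, z⟩ ⟨-, -, -, h⟩
  simp only [coe_product, coe_Icc, Set.mem_prod, Set.mem_Icc]
  refine ⟨?_, ?_, ?_⟩ <;> apply abs_le_of_sq_le_sq' <;>
    nlinarith [sq_nonneg x, sq_nonneg y, sq_nonneg z]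

def offset (p : ℤ × ℤ × ℤ) : ℤ := p.2.2 - p.1 - p.2.1 - 1

/-- On a solution, `(2x + 1)(2y + 1) = offset² + offset + 1 > 0`: `smallFactor` and `largeFactor`
are the absolute values of these two factors. -/
def smallFactor (p : ℤ × ℤ × ℤ) : ℤ := if 0 ≤ p.1 then 2 * p.1 + 1 else -(2 * p.2.1 + 1)

def largeFactor (p : ℤ × ℤ × ℤ) : ℤ := if 0 ≤ p.1 then 2 * p.2.1 + 1 else -(2 * p.1 + 1)

lemma factors_of_mem {k : ℕ} {p : ℤ × ℤ × ℤ} (hp : p ∈ orderedSolutions k) :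
    1 ≤ smallFactor p ∧ smallFactor p ≤ largeFactor p ∧ largeFactor p ≤ 2 * k + 1 ∧
      smallFactor p * largeFactor p = offset p ^ 2 + offset p + 1 := by
  obtain ⟨x, y, z⟩ := p
  obtain ⟨hxy, -, hF, hn⟩ := hp
  rw [F3_eq] at hF
  simp only [smallFactor, largeFactor, offset] at *
  have hpos : 0 < (2 * x + 1) * (2 * y + 1) := by nlinarith [sq_nonneg (2 * (z - x - y - 1) + 1)]
  have hxk := abs_le_of_sq_le_sq' (by nlinarith [sq_nonneg y, sq_nonneg z] : x ^ 2 ≤ (k : ℤ) ^ 2)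
    (by positivity)
  have hyk := abs_le_of_sq_le_sq' (by nlinarith [sq_nonneg x, sq_nonneg z] : y ^ 2 ≤ (k : ℤ) ^ 2)
    (by positivity)
  split_ifs with hx
  · exact ⟨by omega, by omega, by omega, by linarith⟩
  · have : 2 * y + 1 < 0 := by nlinarith
    exact ⟨by omega, by omega, by omega, by linarith⟩

lemma eq_of_factors_eq {p p' : ℤ × ℤ × ℤ} (hs : 0 ≤ p.1 ↔ 0 ≤ p'.1)
    (hv : smallFactor p = smallFactor p') (hw : largeFactor p = largeFactor p')
    (hj : offset p = offset p') : p = p' := by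
  obtain ⟨x, y, z⟩ := p
  obtain ⟨x', y', z'⟩ := p'
  simp only [smallFactor, largeFactor, offset] at *
  split_ifs at hv hw <;> simp only [Prod.mk.injEq] <;> omega

lemma sq_abs_ediv_add_one_mul_le {v w j : ℤ} (hv : 0 < v) (hvw : v ≤ w)
    (h : v * w = j ^ 2 + j + 1) : (|j / v| + 1) ^ 2 * v ≤ 12 * w := by
  have h1 := Int.ediv_mul_le j hv.ne'
  have h2 := Int.lt_ediv_add_one_mul_self j hv
  have hq : (|j / v| + 1) * v ≤ |j| + 2 * v := by
    rcases le_or_gt 0 j with hj | hj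
    · rw [abs_of_nonneg hj, abs_of_nonneg ((Int.ediv_nonneg_iff_of_pos hv).2 hj)]
      linarith
    · rw [abs_of_neg hj, abs_of_neg (Int.ediv_neg_of_neg_of_pos hj hv)]
      linarith
  have hj : j ^ 2 ≤ 2 * (v * w) := by nlinarith [sq_nonneg (j + 1)]
  have hsq : ((|j / v| + 1) * v) ^ 2 ≤ 12 * w * v :=
    calc ((|j / v| + 1) * v) ^ 2 ≤ (|j| + 2 * v) ^ 2 := by gcongr
      _ ≤ 2 * j ^ 2 + 8 * v ^ 2 := by nlinarith [sq_abs j, sq_nonneg (|j| - 2 * v)]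
      _ ≤ 12 * w * v := by nlinarith
  nlinarith

def IsSolutionCode (p : ℤ × ℤ × ℤ) (t : Bool × ℤ × ℤ × ℤ) : Prop :=
  t.1 = decide (0 ≤ p.1) ∧ IsEisensteinRep (smallFactor p) (offset p) t.2.1 t.2.2.1 ∧
    t.2.2.2 = offset p / smallFactor p

lemma exists_isSolutionCode {k : ℕ} {p : ℤ × ℤ × ℤ} (hp : p ∈ orderedSolutions k) :
    ∃ t ∈ (univ : Finset Bool) ×ˢ hyperbolicRegion (Nat.sqrt (24 * (2 * k + 1))),
      IsSolutionCode p t := by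
  obtain ⟨hv, hvw, hw, hprod⟩ := factors_of_mem hp
  obtain ⟨a, b, hab⟩ := exists_isEisensteinRep (by omega) ⟨_, hprod.symm⟩
  refine ⟨(decide (0 ≤ p.1), a, b, offset p / smallFactor p), ?_, rfl, hab, rfl⟩
  have hq := sq_abs_ediv_add_one_mul_le (by omega) hvw hprod
  have hnorm := hab.2.1
  refine mem_product.2 ⟨mem_univ _, mem_hyperbolicRegion (by nlinarith [sq_nonneg (a - b)]) ?_⟩
  push_cast
  nlinarith [sq_nonneg (a + b), sq_nonneg (|offset p / smallFactor p| + 1)]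

lemma IsSolutionCode.eq {k : ℕ} {p p' : ℤ × ℤ × ℤ} {t : Bool × ℤ × ℤ × ℤ}
    (hp : p ∈ orderedSolutions k) (hp' : p' ∈ orderedSolutions k)
    (h : IsSolutionCode p t) (h' : IsSolutionCode p' t) : p = p' := by
  obtain ⟨hs, hrep, hq⟩ := h
  obtain ⟨hs', hrep', hq'⟩ := h'
  obtain ⟨hv, -, -, hprod⟩ := factors_of_mem hp
  obtain ⟨-, -, -, hprod'⟩ := factors_of_mem hp'
  obtain ⟨hvv, hjj⟩ := hrep.modEq hrep'
  have hj : offset p = offset p' := by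
    rw [← Int.mul_ediv_add_emod (offset p) (smallFactor p),
      ← Int.mul_ediv_add_emod (offset p') (smallFactor p'), ← hq, ← hq', hvv, hjj]
  have hw : largeFactor p = largeFactor p' :=
    mul_left_cancel₀ (by omega : smallFactor p ≠ 0) (by rw [hprod, hj, ← hvv, hprod'])
  exact eq_of_factors_eq (by simpa using hs.symm.trans hs') hvv.symm hw hj

theorem ncard_orderedSolutions_le (k : ℕ) :
    (orderedSolutions k).ncard ≤ 1728 * (2 * k + 1) := by
  set L := Nat.sqrt (24 * (2 * k + 1))
  have hL : L ^ 2 ≤ 24 * (2 * k + 1) := Nat.sqrt_le' _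
  set T : Finset (Bool × ℤ × ℤ × ℤ) := univ ×ˢ hyperbolicRegion L
  calc (orderedSolutions k).ncard ≤ (T : Set (Bool × ℤ × ℤ × ℤ)).ncard :=
        Set.ncard_le_ncard_of_forall_subsingleton IsSolutionCode
          (fun p hp => by simpa only [mem_coe] using exists_isSolutionCode hp)
          (fun t _ p hp p' hp' => hp.2.eq hp.1 hp'.1 hp'.2) (finite_toSet _)
    _ = 2 * (hyperbolicRegion L).card := by rw [Set.ncard_coe_finset, card_product]; rfl
    _ ≤ 2 * (36 * L ^ 2) := by gcongr; exact card_hyperbolicRegion_le L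
    _ ≤ 1728 * (2 * k + 1) := by omega

lemma exists_mem_fairGames {k : ℕ} {v w r : ℤ} (hr : 0 ≤ r) (hrv : r < v)
    (h : v * w = r ^ 2 + r + 1) (hk : 3 * v ≤ k) :
    ∃ p ∈ fairGames k, 2 * p.2.1 + 1 = v ∧ offset p = r := by
  have hodd : Odd (v * w) := by
    rw [h, show r ^ 2 + r + 1 = r * (r + 1) + 1 by ring]
    exact (Int.even_mul_succ_self r).add_one
  obtain ⟨⟨m, rfl⟩, ⟨n, rfl⟩⟩ := Int.odd_mul.1 hodd
  have hk' : (3 * (2 * m + 1)) ^ 2 ≤ (k : ℤ) ^ 2 := by gcongr; omega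
  have hn : 0 ≤ n := by nlinarith
  have hnm : n ≤ m := by nlinarith
  refine ⟨(n, m, m + n + r + 1), ⟨hn, by simp only; omega, by simp only; omega, ?_, ?_⟩, rfl,
    by simp only [offset]; ring⟩
  · rw [F3_eq]; linear_combination -h
  · simp only; nlinarith

lemma card_coprimePairs_le_ncard_fairGames {N k : ℕ} (hk : 9 * N ^ 2 ≤ k) :
    (coprimePairs N).card ≤ (fairGames k).ncard := by
  rw [← Set.ncard_coe_finset]
  refine Set.ncard_le_ncard_of_forall_subsingleton
    (fun ab p => IsEisensteinRep (2 * p.2.1 + 1) (offset p) ab.1 ab.2) ?_ ?_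
    ((orderedSolutions_finite k).subset fun _ hp => hp.2)
  · rintro ⟨a, b⟩ hab
    simp only [coprimePairs, coe_filter, mem_product, mem_Icc, Set.mem_ofPred_eq] at hab
    obtain ⟨⟨⟨ha, haN⟩, hb, hbN⟩, hcop⟩ := hab
    obtain ⟨r, hr, hrv, hrep⟩ :=
      exists_isEisensteinRep_of_isCoprime (Nat.isCoprime_iff_coprime.2 hcop) (by positivity)
    obtain ⟨w, hw⟩ := hrep.dvd
    have hvk : 3 * ((a : ℤ) ^ 2 + a * b + b ^ 2) ≤ k := by
      have : 3 * (a ^ 2 + a * b + b ^ 2) ≤ k := by nlinarith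
      exact_mod_cast this
    obtain ⟨p, hp, hpv, hpr⟩ := exists_mem_fairGames hr hrv hw.symm hvk
    exact ⟨p, hp, by rw [hpv, hpr]; exact hrep⟩
  · rintro p - ⟨a, b⟩ ⟨hab, hrep⟩ ⟨c, d⟩ ⟨hcd, hrep'⟩
    simp only [coprimePairs, coe_filter, mem_product, mem_Icc, Set.mem_ofPred_eq] at hab hcd
    dsimp only at hrep hrep'
    obtain ⟨hac, hbd⟩ := hrep.eq_of_pos hrep' (by omega) (by omega) (by omega) (by omega)
    simp only [Prod.mk.injEq]
    exact ⟨by exact_mod_cast hac, by exact_mod_cast hbd⟩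

theorem le_mul_ncard_fairGames {k : ℕ} (hk : 9 ≤ k) : k ≤ 432 * (fairGames k).ncard := by
  set N := Nat.sqrt k / 3
  have hs : Nat.sqrt k ^ 2 ≤ k := Nat.sqrt_le' k
  have hs' : k < (Nat.sqrt k + 1) ^ 2 := Nat.lt_succ_sqrt' k
  have h3 : 3 ≤ Nat.sqrt k := Nat.le_sqrt'.2 hk
  have hN : 9 * N ^ 2 ≤ k := by
    have : 3 * N ≤ Nat.sqrt k := Nat.mul_div_le _ _
    nlinarith
  have hN' : k ≤ 36 * N ^ 2 := by
    have : Nat.sqrt k + 1 ≤ 3 * (N + 1) := by omega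
    have : 1 ≤ N := by omega
    nlinarith
  have := sq_le_twelve_mul_card_coprimePairs N
  have := card_coprimePairs_le_ncard_fairGames hN
  omega

/-- The number of solutions of `F_3 = 0` (up to permutation, i.e. ascending triples)
of Euclidean norm at most `k` is `Θ(k)`, and likewise for the 3-color fair games. -/
theorem stmt_18 :
    (∃ c1 c2 : ℝ, 0 < c1 ∧ 0 < c2 ∧ ∃ K : ℕ, ∀ k : ℕ, K ≤ k →
      c1 * k ≤ ({x : ℤ × ℤ × ℤ | x.1 ≤ x.2.1 ∧ x.2.1 ≤ x.2.2 ∧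
          F3 x.1 x.2.1 x.2.2 = 0 ∧
          x.1 ^ 2 + x.2.1 ^ 2 + x.2.2 ^ 2 ≤ (k : ℤ) ^ 2}.ncard : ℝ) ∧
        ({x : ℤ × ℤ × ℤ | x.1 ≤ x.2.1 ∧ x.2.1 ≤ x.2.2 ∧
          F3 x.1 x.2.1 x.2.2 = 0 ∧
          x.1 ^ 2 + x.2.1 ^ 2 + x.2.2 ^ 2 ≤ (k : ℤ) ^ 2}.ncard : ℝ) ≤ c2 * k) ∧
    (∃ c1 c2 : ℝ, 0 < c1 ∧ 0 < c2 ∧ ∃ K : ℕ, ∀ k : ℕ, K ≤ k →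
      c1 * k ≤ ({x : ℤ × ℤ × ℤ | 0 ≤ x.1 ∧ x.1 ≤ x.2.1 ∧ x.2.1 ≤ x.2.2 ∧
          F3 x.1 x.2.1 x.2.2 = 0 ∧
          x.1 ^ 2 + x.2.1 ^ 2 + x.2.2 ^ 2 ≤ (k : ℤ) ^ 2}.ncard : ℝ) ∧
        ({x : ℤ × ℤ × ℤ | 0 ≤ x.1 ∧ x.1 ≤ x.2.1 ∧ x.2.1 ≤ x.2.2 ∧
          F3 x.1 x.2.1 x.2.2 = 0 ∧
          x.1 ^ 2 + x.2.1 ^ 2 + x.2.2 ^ 2 ≤ (k : ℤ) ^ 2}.ncard : ℝ) ≤ c2 * k) := by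
  have hlower (k : ℕ) (hk : 9 ≤ k) : (1 / 432 : ℝ) * k ≤ (fairGames k).ncard := by
    have : (k : ℝ) ≤ 432 * (fairGames k).ncard := by exact_mod_cast le_mul_ncard_fairGames hk
    linarith
  have hupper (k : ℕ) (hk : 9 ≤ k) : ((orderedSolutions k).ncard : ℝ) ≤ 5184 * k := by
    have : ((orderedSolutions k).ncard : ℝ) ≤ 1728 * (2 * k + 1) := by
      exact_mod_cast ncard_orderedSolutions_le k
    have : (9 : ℝ) ≤ k := by exact_mod_cast hk
    linarith
  have hsub (k : ℕ) : ((fairGames k).ncard : ℝ) ≤ (orderedSolutions k).ncard := by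
    exact_mod_cast Set.ncard_le_ncard (fun _ (hx : _ ∈ fairGames k) => hx.2)
      (orderedSolutions_finite k)
  exact ⟨⟨1 / 432, 5184, by norm_num, by norm_num, 9, fun k hk =>
      ⟨(hlower k hk).trans (hsub k), hupper k hk⟩⟩,
    ⟨1 / 432, 5184, by norm_num, by norm_num, 9, fun k hk =>
      ⟨hlower k hk, (hsub k).trans (hupper k hk)⟩⟩⟩
end

section
/- Define sequences (f_i) and (m_i) by f_0 = f_1 = 1, f_{i+2} = f_i + f_{i+1}, and m_0 = 0, m_1 = 1, m_2 = 3, m_{i+3} = 2(m_{i+1} + m_{i+2}) + 1 − m_i. Then for every k ≥ 0: m_k = f_k^2 if k is odd, and m_k = f_k^2 − 1 if k is even. -/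
/-!
Squaring the Fibonacci recursion shows that `f_k²` satisfies the homogeneous part
`x_{k+3} = 2(x_{k+1} + x_{k+2}) − x_k` of the recursion for `m`, while the parity indicator
`e_k` (`1` for even `k`, `0` for odd `k`) satisfies `e_{k+3} = 2(e_{k+1} + e_{k+2}) − 1 − e_k`.
Hence `f_k² − e_k` satisfies the recursion of `m` and has the same three initial values.
-/

theorem eq_of_three_term_recurrence {α : Type*} {a b : ℕ → α} (g : α → α → α → α)
    (ha : ∀ i, a (i + 3) = g (a i) (a (i + 1)) (a (i + 2)))
    (hb : ∀ i, b (i + 3) = g (b i) (b (i + 1)) (b (i + 2)))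
    (h0 : a 0 = b 0) (h1 : a 1 = b 1) (h2 : a 2 = b 2) : a = b := by
  funext n
  induction n using Nat.strong_induction_on with
  | _ n ih =>
    match n, ih with
    | 0, _ => exact h0
    | 1, _ => exact h1
    | 2, _ => exact h2
    | i + 3, ih =>
      rw [ha, hb, ih i (by omega), ih (i + 1) (by omega), ih (i + 2) (by omega)]

theorem sq_add_three_of_fib_recurrence {R : Type*} [CommRing R] {f : ℕ → R}
    (hf : ∀ i, f (i + 2) = f i + f (i + 1)) (k : ℕ) :
    f (k + 3) ^ 2 = 2 * (f (k + 1) ^ 2 + f (k + 2) ^ 2) - f k ^ 2 := by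
  have h3 : f (k + 3) = f (k + 1) + f (k + 2) := hf (k + 1)
  rw [h3, hf k]
  ring

def evenIndicator (k : ℕ) : ℤ := if Even k then 1 else 0

theorem evenIndicator_add_one (k : ℕ) : evenIndicator (k + 1) = 1 - evenIndicator k := by
  by_cases hk : Even k <;> simp [evenIndicator, hk, Nat.even_add_one]

/-- With `f` the Fibonacci sequence (`f₀ = f₁ = 1`) and `m` the sequence of maximal
coordinates of 3-color fair games (`m₀ = 0`, `m₁ = 1`, `m₂ = 3`,
`m_{i+3} = 2(m_{i+1} + m_{i+2}) + 1 − m_i`), we have `m_k = f_k²` for odd `k` and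
`m_k = f_k² − 1` for even `k`. -/
theorem stmt_19 (f m : ℕ → ℤ)
    (hf0 : f 0 = 1) (hf1 : f 1 = 1) (hf : ∀ i, f (i + 2) = f i + f (i + 1))
    (hm0 : m 0 = 0) (hm1 : m 1 = 1) (hm2 : m 2 = 3)
    (hm : ∀ i, m (i + 3) = 2 * (m (i + 1) + m (i + 2)) + 1 - m i) :
    ∀ k : ℕ, (Odd k → m k = (f k) ^ 2) ∧ (Even k → m k = (f k) ^ 2 - 1) := by
  have hf2 : f 2 = 2 := by rw [hf 0, hf0, hf1]; norm_num
  have closed_form : m = fun k => f k ^ 2 - evenIndicator k := by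
    refine eq_of_three_term_recurrence (fun x y z => 2 * (y + z) + 1 - x) hm (fun i => ?_)
      (by simp [hm0, hf0, evenIndicator]) (by simp [hm1, hf1, evenIndicator])
      (by simp [hm2, hf2, evenIndicator])
    have e1 := evenIndicator_add_one i
    have e2 := evenIndicator_add_one (i + 1)
    have e3 := evenIndicator_add_one (i + 2)
    linear_combination sq_add_three_of_fib_recurrence hf i - e3 + 3 * e2 - e1
  intro k
  rw [closed_form]
  refine ⟨fun hk => ?_, fun hk => ?_⟩ <;>
    simp [evenIndicator, hk, Nat.not_even_iff_odd.mpr]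
end
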